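/- Let F be an algebraically closed field of arbitrary characteristic and let a, b be elements of the split octonion algebra O over F. If tr(a) = tr(b), n(a) = n(b), and a is a scalar multiple of 1_O if and only if b is a scalar multiple of 1_O, then there exists an F-algebra automorphism g of O with g a = b. (In other words, the trace, the norm, and the indicator of being a scalar separate automorphism orbits on O.) -/

import Mathlib

namespace OctoPaper

variable (F : Type*) [Field F]

/-- The split (Zorn matrix) octonion algebra over `F`. -/
structure Octo where
  x1 : F
  u : Fin 3 → F
  v : Fin 3 → F
  x8 : F

variable {F}

/-- Dot product on `F³`. -/
def dot (u v : Fin 3 → F) : F := u 0 * v 0 + u 1 * v 1 + u 2 * v 2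

/-- Cross product on `F³`. -/
def cross (u v : Fin 3 → F) : Fin 3 → F :=
  ![u 1 * v 2 - u 2 * v 1, u 2 * v 0 - u 0 * v 2, u 0 * v 1 - u 1 * v 0]

instance : Mul (Octo F) where
  mul x y :=
    ⟨x.x1 * y.x1 + dot x.u y.v,
     fun i => x.x1 * y.u i + y.x8 * x.u i - cross x.v y.v i,
     fun i => y.x1 * x.v i + x.x8 * y.v i + cross x.u y.u i,
     x.x8 * y.x8 + dot x.v y.u⟩

instance : Add (Octo F) where add x y := ⟨x.x1 + y.x1, x.u + y.u, x.v + y.v, x.x8 + y.x8⟩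
instance : Neg (Octo F) where neg x := ⟨-x.x1, -x.u, -x.v, -x.x8⟩
instance : Sub (Octo F) where sub x y := x + -y
instance : SMul F (Octo F) where smul c x := ⟨c * x.x1, c • x.u, c • x.v, c * x.x8⟩
instance : One (Octo F) where one := ⟨1, 0, 0, 1⟩
instance : Zero (Octo F) where zero := ⟨0, 0, 0, 0⟩

/-- Trace of an octonion. -/
def tr (x : Octo F) : F := x.x1 + x.x8

/-- Norm of an octonion. -/
def onorm (x : Octo F) : F := x.x1 * x.x8 - dot x.u x.v

/-- Conjugate of an octonion. -/
def conj (x : Octo F) : Octo F := ⟨x.x8, -x.u, -x.v, x.x1⟩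

/-- `g` is an `F`-algebra automorphism of the split octonion algebra:
an `F`-linear bijection preserving multiplication. -/
def IsAut (g : Octo F → Octo F) : Prop :=
  Function.Bijective g ∧
  (∀ x y : Octo F, g (x + y) = g x + g y) ∧
  (∀ (c : F) (x : Octo F), g (c • x) = c • g x) ∧
  (∀ x y : Octo F, g (x * y) = g x * g y)

/-- The automorphism `ρ(g)` of `O` attached to `g ∈ SL₃(F)`. -/
def rho (g : Matrix.SpecialLinearGroup (Fin 3) F) (x : Octo F) : Octo F :=
  ⟨x.x1, Matrix.vecMul x.u (g : Matrix (Fin 3) (Fin 3) F),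
   Matrix.vecMul x.v (Matrix.transpose (↑(g⁻¹) : Matrix (Fin 3) (Fin 3) F)), x.x8⟩

/-- The automorphism `ℏ` of `O`. -/
def hbar (x : Octo F) : Octo F := ⟨x.x8, -x.v, -x.u, x.x1⟩

/-- The automorphism `δ₁(u)` of `O`. -/
def delta1 (w : Fin 3 → F) (y : Octo F) : Octo F :=
  ⟨y.x1 - dot w y.v,
   fun i => (y.x1 - y.x8 - dot w y.v) * w i + y.u i,
   fun i => y.v i - cross y.u w i,
   y.x8 + dot w y.v⟩

/-- The automorphism `δ₂(v)` of `O`. -/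
def delta2 (w : Fin 3 → F) (y : Octo F) : Octo F :=
  ⟨y.x1 + dot y.u w,
   fun i => y.u i + cross y.v w i,
   fun i => (-y.x1 + y.x8 - dot y.u w) * w i + y.v i,
   y.x8 - dot y.u w⟩

end OctoPaper
namespace OctoPaper

set_option linter.unusedSectionVars false
set_option maxHeartbeats 1600000

variable {F : Type*} [Field F]

lemma oext {x y : Octo F} (h1 : x.x1 = y.x1) (h2 : ∀ i, x.u i = y.u i)
    (h3 : ∀ i, x.v i = y.v i) (h4 : x.x8 = y.x8) : x = y := by
  cases x; cases y
  simp only [Octo.mk.injEq]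
  exact ⟨h1, funext h2, funext h3, h4⟩

lemma oext8 {x y : Octo F} (h1 : x.x1 = y.x1)
    (hu0 : x.u 0 = y.u 0) (hu1 : x.u 1 = y.u 1) (hu2 : x.u 2 = y.u 2)
    (hv0 : x.v 0 = y.v 0) (hv1 : x.v 1 = y.v 1) (hv2 : x.v 2 = y.v 2)
    (h8 : x.x8 = y.x8) : x = y := by
  refine oext h1 (fun i => ?_) (fun i => ?_) h8 <;> fin_cases i
  exacts [hu0, hu1, hu2, hv0, hv1, hv2]

@[simp] lemma mul_x1 (x y : Octo F) : (x * y).x1 = x.x1 * y.x1 + dot x.u y.v := rfl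
@[simp] lemma mul_u (x y : Octo F) (i : Fin 3) :
    (x * y).u i = x.x1 * y.u i + y.x8 * x.u i - cross x.v y.v i := rfl
@[simp] lemma mul_v (x y : Octo F) (i : Fin 3) :
    (x * y).v i = y.x1 * x.v i + x.x8 * y.v i + cross x.u y.u i := rfl
@[simp] lemma mul_x8 (x y : Octo F) : (x * y).x8 = x.x8 * y.x8 + dot x.v y.u := rfl

@[simp] lemma add_x1 (x y : Octo F) : (x + y).x1 = x.x1 + y.x1 := rfl
@[simp] lemma add_u (x y : Octo F) (i : Fin 3) : (x + y).u i = x.u i + y.u i := rfl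
@[simp] lemma add_v (x y : Octo F) (i : Fin 3) : (x + y).v i = x.v i + y.v i := rfl
@[simp] lemma add_x8 (x y : Octo F) : (x + y).x8 = x.x8 + y.x8 := rfl

@[simp] lemma smul_x1 (c : F) (x : Octo F) : (c • x).x1 = c * x.x1 := rfl
@[simp] lemma smul_u (c : F) (x : Octo F) (i : Fin 3) : (c • x).u i = c * x.u i := rfl
@[simp] lemma smul_v (c : F) (x : Octo F) (i : Fin 3) : (c • x).v i = c * x.v i := rfl
@[simp] lemma smul_x8 (c : F) (x : Octo F) : (c • x).x8 = c * x.x8 := rfl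

@[simp] lemma one_x1 : (1 : Octo F).x1 = 1 := rfl
@[simp] lemma one_u (i : Fin 3) : (1 : Octo F).u i = 0 := rfl
@[simp] lemma one_v (i : Fin 3) : (1 : Octo F).v i = 0 := rfl
@[simp] lemma one_x8 : (1 : Octo F).x8 = 1 := rfl

@[simp] lemma dot_eq (u v : Fin 3 → F) : dot u v = u 0 * v 0 + u 1 * v 1 + u 2 * v 2 := rfl
@[simp] lemma cross0 (u v : Fin 3 → F) : cross u v 0 = u 1 * v 2 - u 2 * v 1 := rfl
@[simp] lemma cross1 (u v : Fin 3 → F) : cross u v 1 = u 2 * v 0 - u 0 * v 2 := rfl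
@[simp] lemma cross2 (u v : Fin 3 → F) : cross u v 2 = u 0 * v 1 - u 1 * v 0 := rfl

@[simp] lemma hbar_x1 (x : Octo F) : (hbar x).x1 = x.x8 := rfl
@[simp] lemma hbar_u (x : Octo F) (i : Fin 3) : (hbar x).u i = -(x.v i) := rfl
@[simp] lemma hbar_v (x : Octo F) (i : Fin 3) : (hbar x).v i = -(x.u i) := rfl
@[simp] lemma hbar_x8 (x : Octo F) : (hbar x).x8 = x.x1 := rfl

@[simp] lemma delta1_x1 (w : Fin 3 → F) (y : Octo F) : (delta1 w y).x1 = y.x1 - dot w y.v := rfl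
@[simp] lemma delta1_u (w : Fin 3 → F) (y : Octo F) (i : Fin 3) :
    (delta1 w y).u i = (y.x1 - y.x8 - dot w y.v) * w i + y.u i := rfl
@[simp] lemma delta1_v (w : Fin 3 → F) (y : Octo F) (i : Fin 3) :
    (delta1 w y).v i = y.v i - cross y.u w i := rfl
@[simp] lemma delta1_x8 (w : Fin 3 → F) (y : Octo F) : (delta1 w y).x8 = y.x8 + dot w y.v := rfl

@[simp] lemma delta2_x1 (w : Fin 3 → F) (y : Octo F) : (delta2 w y).x1 = y.x1 + dot y.u w := rfl
@[simp] lemma delta2_u (w : Fin 3 → F) (y : Octo F) (i : Fin 3) :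
    (delta2 w y).u i = y.u i + cross y.v w i := rfl
@[simp] lemma delta2_v (w : Fin 3 → F) (y : Octo F) (i : Fin 3) :
    (delta2 w y).v i = (-y.x1 + y.x8 - dot y.u w) * w i + y.v i := rfl
@[simp] lemma delta2_x8 (w : Fin 3 → F) (y : Octo F) : (delta2 w y).x8 = y.x8 - dot y.u w := rfl

/-- `hbar` is an automorphism. -/
lemma isAut_hbar : IsAut (hbar : Octo F → Octo F) := by
  refine ⟨Function.bijective_iff_has_inverse.mpr ⟨hbar, fun x => ?_, fun x => ?_⟩,
    fun x y => ?_, fun c x => ?_, fun x y => ?_⟩ <;>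
  refine oext8 ?_ ?_ ?_ ?_ ?_ ?_ ?_ ?_ <;> simp <;> ring

@[simp] lemma hbar_tr (x : Octo F) : tr (hbar x) = tr x := by simp [tr]; try ring
@[simp] lemma hbar_onorm (x : Octo F) : onorm (hbar x) = onorm x := by
  simp [onorm]; try ring

/-- `delta1` is an automorphism. -/
lemma isAut_delta1 (w : Fin 3 → F) : IsAut (delta1 w : Octo F → Octo F) := by
  refine ⟨Function.bijective_iff_has_inverse.mpr ⟨delta1 (-w), fun x => ?_, fun x => ?_⟩,
    fun x y => ?_, fun c x => ?_, fun x y => ?_⟩ <;>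
  refine oext8 ?_ ?_ ?_ ?_ ?_ ?_ ?_ ?_ <;>
  simp [Pi.neg_apply] <;> ring

@[simp] lemma delta1_tr (w : Fin 3 → F) (x : Octo F) : tr (delta1 w x) = tr x := by
  simp [tr]; try ring
@[simp] lemma delta1_onorm (w : Fin 3 → F) (x : Octo F) : onorm (delta1 w x) = onorm x := by
  simp [onorm]; try ring

/-- `delta2` is an automorphism. -/
lemma isAut_delta2 (w : Fin 3 → F) : IsAut (delta2 w : Octo F → Octo F) := by
  refine ⟨Function.bijective_iff_has_inverse.mpr ⟨delta2 (-w), fun x => ?_, fun x => ?_⟩,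
    fun x y => ?_, fun c x => ?_, fun x y => ?_⟩ <;>
  refine oext8 ?_ ?_ ?_ ?_ ?_ ?_ ?_ ?_ <;>
  simp [Pi.neg_apply] <;> ring

@[simp] lemma delta2_tr (w : Fin 3 → F) (x : Octo F) : tr (delta2 w x) = tr x := by
  simp [tr]; try ring
@[simp] lemma delta2_onorm (w : Fin 3 → F) (x : Octo F) : onorm (delta2 w x) = onorm x := by
  simp [onorm]; try ring

end OctoPaper
namespace OctoPaper

set_option linter.unusedSectionVars false
set_option maxHeartbeats 3200000

variable {F : Type*} [Field F]

lemma vecMul3 (u : Fin 3 → F) (A : Matrix (Fin 3) (Fin 3) F) (i : Fin 3) :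
    Matrix.vecMul u A i = u 0 * A 0 i + u 1 * A 1 i + u 2 * A 2 i := by
  simp [Matrix.vecMul, dotProduct, Fin.sum_univ_three]

lemma key_dot (A : Matrix (Fin 3) (Fin 3) F) (u v : Fin 3 → F) :
    dot (Matrix.vecMul u A) (Matrix.vecMul v A.adjugate.transpose) = A.det * dot u v := by
  simp [dot_eq, Matrix.vecMul, dotProduct, Fin.sum_univ_three,
    Matrix.adjugate_fin_three, Matrix.det_fin_three, Matrix.vecHead, Matrix.vecTail]
  ring

lemma key_dot' (A : Matrix (Fin 3) (Fin 3) F) (u v : Fin 3 → F) :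
    dot (Matrix.vecMul v A.adjugate.transpose) (Matrix.vecMul u A) = A.det * dot v u := by
  simp [dot_eq, Matrix.vecMul, dotProduct, Fin.sum_univ_three,
    Matrix.adjugate_fin_three, Matrix.det_fin_three, Matrix.vecHead, Matrix.vecTail]
  ring

lemma key_cross_u (A : Matrix (Fin 3) (Fin 3) F) (u u' : Fin 3 → F) (i : Fin 3) :
    cross (Matrix.vecMul u A) (Matrix.vecMul u' A) i =
      Matrix.vecMul (cross u u') A.adjugate.transpose i := by
  have h0 : cross (Matrix.vecMul u A) (Matrix.vecMul u' A) 0 =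
      Matrix.vecMul (cross u u') A.adjugate.transpose 0 := by
    simp [cross0, cross1, cross2, Matrix.vecMul, dotProduct, Fin.sum_univ_three,
      Matrix.adjugate_fin_three, Matrix.vecHead, Matrix.vecTail]; ring
  have h1 : cross (Matrix.vecMul u A) (Matrix.vecMul u' A) 1 =
      Matrix.vecMul (cross u u') A.adjugate.transpose 1 := by
    simp [cross0, cross1, cross2, Matrix.vecMul, dotProduct, Fin.sum_univ_three,
      Matrix.adjugate_fin_three, Matrix.vecHead, Matrix.vecTail]; ring
  have h2 : cross (Matrix.vecMul u A) (Matrix.vecMul u' A) 2 =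
      Matrix.vecMul (cross u u') A.adjugate.transpose 2 := by
    simp [cross0, cross1, cross2, Matrix.vecMul, dotProduct, Fin.sum_univ_three,
      Matrix.adjugate_fin_three, Matrix.vecHead, Matrix.vecTail]; ring
  fin_cases i
  exacts [h0, h1, h2]

lemma key_cross_v (A : Matrix (Fin 3) (Fin 3) F) (v v' : Fin 3 → F) (i : Fin 3) :
    cross (Matrix.vecMul v A.adjugate.transpose) (Matrix.vecMul v' A.adjugate.transpose) i =
      A.det * Matrix.vecMul (cross v v') A i := by
  have h0 : cross (Matrix.vecMul v A.adjugate.transpose)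
      (Matrix.vecMul v' A.adjugate.transpose) 0 =
      A.det * Matrix.vecMul (cross v v') A 0 := by
    simp [cross0, cross1, cross2, Matrix.vecMul, dotProduct, Fin.sum_univ_three,
      Matrix.adjugate_fin_three, Matrix.det_fin_three, Matrix.vecHead, Matrix.vecTail]; ring
  have h1 : cross (Matrix.vecMul v A.adjugate.transpose)
      (Matrix.vecMul v' A.adjugate.transpose) 1 =
      A.det * Matrix.vecMul (cross v v') A 1 := by
    simp [cross0, cross1, cross2, Matrix.vecMul, dotProduct, Fin.sum_univ_three,
      Matrix.adjugate_fin_three, Matrix.det_fin_three, Matrix.vecHead, Matrix.vecTail]; ring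
  have h2 : cross (Matrix.vecMul v A.adjugate.transpose)
      (Matrix.vecMul v' A.adjugate.transpose) 2 =
      A.det * Matrix.vecMul (cross v v') A 2 := by
    simp [cross0, cross1, cross2, Matrix.vecMul, dotProduct, Fin.sum_univ_three,
      Matrix.adjugate_fin_three, Matrix.det_fin_three, Matrix.vecHead, Matrix.vecTail]; ring
  fin_cases i
  exacts [h0, h1, h2]

@[simp] lemma rho_x1 (g : Matrix.SpecialLinearGroup (Fin 3) F) (x : Octo F) :
    (rho g x).x1 = x.x1 := rfl
@[simp] lemma rho_x8 (g : Matrix.SpecialLinearGroup (Fin 3) F) (x : Octo F) :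
    (rho g x).x8 = x.x8 := rfl
lemma rho_u_fun (g : Matrix.SpecialLinearGroup (Fin 3) F) (x : Octo F) :
    (rho g x).u = Matrix.vecMul x.u (g : Matrix (Fin 3) (Fin 3) F) := rfl
lemma rho_v_raw (g : Matrix.SpecialLinearGroup (Fin 3) F) (x : Octo F) :
    (rho g x).v = Matrix.vecMul x.v ((↑(g⁻¹) : Matrix (Fin 3) (Fin 3) F).transpose) := rfl
lemma rho_v_fun (g : Matrix.SpecialLinearGroup (Fin 3) F) (x : Octo F) :
    (rho g x).v =
      Matrix.vecMul x.v ((g : Matrix (Fin 3) (Fin 3) F).adjugate.transpose) := by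
  rw [rho_v_raw, Matrix.SpecialLinearGroup.coe_inv]

lemma isAut_rho (g : Matrix.SpecialLinearGroup (Fin 3) F) :
    IsAut (rho g : Octo F → Octo F) := by
  have hdet : ((g : Matrix (Fin 3) (Fin 3) F)).det = 1 := g.2
  refine ⟨Function.bijective_iff_has_inverse.mpr ⟨rho g⁻¹, fun x => ?_, fun x => ?_⟩,
    fun x y => ?_, fun c x => ?_, fun x y => ?_⟩
  · refine oext rfl (fun i => ?_) (fun i => ?_) rfl
    · rw [rho_u_fun, rho_u_fun, Matrix.vecMul_vecMul,
        ← Matrix.SpecialLinearGroup.coe_mul, mul_inv_cancel,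
        Matrix.SpecialLinearGroup.coe_one, Matrix.vecMul_one]
    · rw [rho_v_raw, rho_v_raw, Matrix.vecMul_vecMul, ← Matrix.transpose_mul,
        ← Matrix.SpecialLinearGroup.coe_mul, inv_inv, mul_inv_cancel,
        Matrix.SpecialLinearGroup.coe_one, Matrix.transpose_one, Matrix.vecMul_one]
  · refine oext rfl (fun i => ?_) (fun i => ?_) rfl
    · rw [rho_u_fun, rho_u_fun, Matrix.vecMul_vecMul,
        ← Matrix.SpecialLinearGroup.coe_mul, inv_mul_cancel,
        Matrix.SpecialLinearGroup.coe_one, Matrix.vecMul_one]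
    · rw [rho_v_raw, rho_v_raw, Matrix.vecMul_vecMul, ← Matrix.transpose_mul,
        ← Matrix.SpecialLinearGroup.coe_mul, inv_inv, inv_mul_cancel,
        Matrix.SpecialLinearGroup.coe_one, Matrix.transpose_one, Matrix.vecMul_one]
  · refine oext8 rfl ?_ ?_ ?_ ?_ ?_ ?_ rfl <;>
    simp only [rho_u_fun, rho_v_fun, add_u, add_v, add_x1, add_x8, vecMul3, Pi.add_apply] <;>
    ring
  · refine oext8 rfl ?_ ?_ ?_ ?_ ?_ ?_ rfl <;>
    simp only [rho_u_fun, rho_v_fun, smul_u, smul_v, smul_x1, smul_x8, vecMul3,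
      Pi.smul_apply, smul_eq_mul] <;> ring
  · refine oext8 ?_ ?_ ?_ ?_ ?_ ?_ ?_ ?_ <;>
    simp only [rho_u_fun, rho_v_fun, rho_x1, rho_x8, mul_x1, mul_x8, mul_u, mul_v]
    · rw [key_dot, hdet, one_mul]
    · rw [key_cross_v, hdet, one_mul]
      simp only [vecMul3, mul_u, cross0, cross1, cross2, dot_eq]; ring
    · rw [key_cross_v, hdet, one_mul]
      simp only [vecMul3, mul_u, cross0, cross1, cross2, dot_eq]; ring
    · rw [key_cross_v, hdet, one_mul]
      simp only [vecMul3, mul_u, cross0, cross1, cross2, dot_eq]; ring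
    · rw [key_cross_u]
      simp only [vecMul3, mul_v, cross0, cross1, cross2, dot_eq]; ring
    · rw [key_cross_u]
      simp only [vecMul3, mul_v, cross0, cross1, cross2, dot_eq]; ring
    · rw [key_cross_u]
      simp only [vecMul3, mul_v, cross0, cross1, cross2, dot_eq]; ring
    · rw [key_dot', hdet, one_mul]

@[simp] lemma rho_tr (g : Matrix.SpecialLinearGroup (Fin 3) F) (x : Octo F) :
    tr (rho g x) = tr x := rfl

@[simp] lemma rho_onorm (g : Matrix.SpecialLinearGroup (Fin 3) F) (x : Octo F) :
    onorm (rho g x) = onorm x := by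
  have hdet : ((g : Matrix (Fin 3) (Fin 3) F)).det = 1 := g.2
  unfold onorm
  rw [rho_x1, rho_x8, rho_u_fun, rho_v_fun, key_dot, hdet, one_mul]

/-- SL₃ moves any nonzero row vector to `e₁`. -/
lemma exists_sl3 (u : Fin 3 → F) (hu : u ≠ 0) :
    ∃ g : Matrix.SpecialLinearGroup (Fin 3) F,
      Matrix.vecMul u (g : Matrix (Fin 3) (Fin 3) F) = ![1, 0, 0] := by
  have hM : ∃ M : Matrix (Fin 3) (Fin 3) F, M.det = 1 ∧ ∀ j, M 0 j = u j := by
    obtain ⟨i, hi⟩ : ∃ i, u i ≠ 0 := by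
      by_contra h; push_neg at h; exact hu (funext h)
    fin_cases i
    · refine ⟨Matrix.of !![u 0, u 1, u 2; 0, 1, 0; 0, 0, (u 0)⁻¹], ?_, ?_⟩
      · rw [Matrix.det_fin_three]
        norm_num [Matrix.vecHead, Matrix.vecTail]
        change u 0 * 1 * (u 0)⁻¹ - u 0 * 0 * 0 - u 1 * 0 * (u 0)⁻¹ + u 1 * 0 * 0 + u 2 * 0 * 0 - u 2 * 1 * 0 = 1
        have h' : u 0 ≠ 0 := hi; simp [h']
      · intro j; fin_cases j <;> rfl
    · refine ⟨Matrix.of !![u 0, u 1, u 2; 0, 0, (u 1)⁻¹; 1, 0, 0], ?_, ?_⟩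
      · rw [Matrix.det_fin_three]
        norm_num [Matrix.vecHead, Matrix.vecTail]
        change u 0 * 0 * 0 - u 0 * (u 1)⁻¹ * 0 - u 1 * 0 * 0 + u 1 * (u 1)⁻¹ * 1 + u 2 * 0 * 0 - u 2 * 0 * 1 = 1
        have h' : u 1 ≠ 0 := hi; simp [h']
      · intro j; fin_cases j <;> rfl
    · refine ⟨Matrix.of !![u 0, u 1, u 2; 1, 0, 0; 0, (u 2)⁻¹, 0], ?_, ?_⟩
      · rw [Matrix.det_fin_three]
        norm_num [Matrix.vecHead, Matrix.vecTail]
        change u 0 * 0 * 0 - u 0 * 0 * (u 2)⁻¹ - u 1 * 1 * 0 + u 1 * 0 * 0 + u 2 * 1 * (u 2)⁻¹ - u 2 * 0 * 0 = 1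
        have h' : u 2 ≠ 0 := hi; simp [h']
      · intro j; fin_cases j <;> rfl
  obtain ⟨M, hdet, hrow⟩ := hM
  set h : Matrix.SpecialLinearGroup (Fin 3) F := ⟨M, hdet⟩ with hh
  refine ⟨h⁻¹, ?_⟩
  have h1 : Matrix.vecMul (![1,0,0] : Fin 3 → F) M = u := by
    funext j
    rw [vecMul3, hrow j]
    simp
  have hcoe : M = (h : Matrix (Fin 3) (Fin 3) F) := rfl
  rw [← h1, hcoe, Matrix.vecMul_vecMul, ← Matrix.SpecialLinearGroup.coe_mul,
    mul_inv_cancel, Matrix.SpecialLinearGroup.coe_one, Matrix.vecMul_one]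

end OctoPaper
namespace OctoPaper

set_option linter.unusedSectionVars false
set_option maxHeartbeats 3200000

variable {F : Type*} [Field F]

lemma mul_one' (x : Octo F) : x * 1 = x := by
  refine oext8 ?_ ?_ ?_ ?_ ?_ ?_ ?_ ?_ <;> simp

lemma one_mul' (x : Octo F) : 1 * x = x := by
  refine oext8 ?_ ?_ ?_ ?_ ?_ ?_ ?_ ?_ <;> simp

lemma isAut_id : IsAut (id : Octo F → Octo F) :=
  ⟨Function.bijective_id, fun _ _ => rfl, fun _ _ => rfl, fun _ _ => rfl⟩

lemma isAut_comp {g f : Octo F → Octo F} (hg : IsAut g) (hf : IsAut f) :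
    IsAut (g ∘ f) := by
  obtain ⟨hgb, hga, hgs, hgm⟩ := hg
  obtain ⟨hfb, hfa, hfs, hfm⟩ := hf
  exact ⟨hgb.comp hfb,
    fun x y => by simp [Function.comp, hfa, hga],
    fun c x => by simp [Function.comp, hfs, hgs],
    fun x y => by simp [Function.comp, hfm, hgm]⟩

lemma isAut_inv {g : Octo F → Octo F} (hg : IsAut g) :
    ∃ g' : Octo F → Octo F, IsAut g' ∧ (∀ x, g' (g x) = x) ∧ (∀ x, g (g' x) = x) := by
  obtain ⟨hb, ha, hs, hm⟩ := hg
  let e := Equiv.ofBijective g hb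
  refine ⟨e.symm, ⟨e.symm.bijective, fun x y => ?_, fun c x => ?_, fun x y => ?_⟩,
    fun x => e.symm_apply_apply x, fun x => e.apply_symm_apply x⟩
  · apply hb.1
    show g _ = g _
    rw [ha]
    have : ∀ z, g (e.symm z) = z := fun z => e.apply_symm_apply z
    rw [this, this, this]
  · apply hb.1
    show g _ = g _
    rw [hs]
    have : ∀ z, g (e.symm z) = z := fun z => e.apply_symm_apply z
    rw [this, this]
  · apply hb.1
    show g _ = g _
    rw [hm]
    have : ∀ z, g (e.symm z) = z := fun z => e.apply_symm_apply z
    rw [this, this, this]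

lemma aut_one {g : Octo F → Octo F} (hg : IsAut g) : g 1 = 1 := by
  obtain ⟨hb, ha, hs, hm⟩ := hg
  have h1 : ∀ z, g 1 * z = z := by
    intro z
    obtain ⟨x, rfl⟩ := hb.2 z
    rw [← hm, one_mul']
  have := h1 1
  rwa [mul_one'] at this

lemma aut_scalar {g : Octo F → Octo F} (hg : IsAut g) (a : Octo F)
    (h : ∃ c : F, a = c • (1 : Octo F)) : ∃ c : F, g a = c • (1 : Octo F) := by
  obtain ⟨c, rfl⟩ := h
  exact ⟨c, by rw [hg.2.2.1, aut_one hg]⟩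

/-- Reachability by an automorphism. -/
def Reach (a b : Octo F) : Prop := ∃ g : Octo F → Octo F, IsAut g ∧ g a = b

lemma reach_refl (a : Octo F) : Reach a a := ⟨id, isAut_id, rfl⟩

lemma reach_trans {a b c : Octo F} (h1 : Reach a b) (h2 : Reach b c) : Reach a c := by
  obtain ⟨g, hg, rfl⟩ := h1
  obtain ⟨f, hf, rfl⟩ := h2
  exact ⟨f ∘ g, isAut_comp hf hg, rfl⟩

lemma reach_nonscalar {a b : Octo F} (h : Reach a b)
    (ha : ¬∃ c : F, a = c • (1 : Octo F)) : ¬∃ c : F, b = c • (1 : Octo F) := by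
  obtain ⟨g, hg, rfl⟩ := h
  intro hb
  obtain ⟨g', hg', hgg, hgg'⟩ := isAut_inv hg
  apply ha
  have := aut_scalar hg' (g a) hb
  rwa [hgg] at this

lemma exists_alpha (t n : F) [IsAlgClosed F] : ∃ α : F, α * (t - α) = n := by
  obtain ⟨α, hα⟩ := IsAlgClosed.exists_root
    (Polynomial.C 1 * Polynomial.X ^ 2 + Polynomial.C (-t) * Polynomial.X + Polynomial.C n)
    (by rw [Polynomial.degree_quadratic one_ne_zero]; exact two_ne_zero)
  refine ⟨α, ?_⟩
  have := hα
  simp only [Polynomial.IsRoot, Polynomial.eval_add, Polynomial.eval_mul,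
    Polynomial.eval_pow, Polynomial.eval_C, Polynomial.eval_X] at this
  linear_combination -this

lemma quad_root (p q : F) [IsAlgClosed F] (h : p ≠ 0 ∨ q ≠ 0) :
    ∃ μ : F, p * (μ * μ) + q * μ - 1 = 0 := by
  by_cases hp : p = 0
  · have hq : q ≠ 0 := by rcases h with h | h; exact absurd hp h; exact h
    exact ⟨q⁻¹, by rw [hp]; field_simp; ring⟩
  · obtain ⟨μ, hμ⟩ := IsAlgClosed.exists_root
      (Polynomial.C p * Polynomial.X ^ 2 + Polynomial.C q * Polynomial.X + Polynomial.C (-1))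
      (by rw [Polynomial.degree_quadratic hp]; exact two_ne_zero)
    refine ⟨μ, ?_⟩
    have := hμ
    simp only [Polynomial.IsRoot, Polynomial.eval_add, Polynomial.eval_mul,
      Polynomial.eval_pow, Polynomial.eval_C, Polynomial.eval_X] at this
    linear_combination this

lemma dot_delta1 (w : Fin 3 → F) (a : Octo F) :
    dot (delta1 w a).u (delta1 w a).v =
      dot a.u a.v + (a.x1 - a.x8 - dot w a.v) * dot w a.v := by
  simp only [delta1_u, delta1_v, dot_eq, cross0, cross1, cross2]
  ring

lemma exists_dual (v : Fin 3 → F) (i : Fin 3) (h : v i ≠ 0) :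
    ∃ w : Fin 3 → F, dot w v = 1 := by
  fin_cases i
  · exact ⟨![(v 0)⁻¹, 0, 0], by simp [dot_eq]; exact inv_mul_cancel₀ h⟩
  · exact ⟨![0, (v 1)⁻¹, 0], by simp [dot_eq]; exact inv_mul_cancel₀ h⟩
  · exact ⟨![0, 0, (v 2)⁻¹], by simp [dot_eq]; exact inv_mul_cancel₀ h⟩

lemma scalar_of (x : Octo F) (h1 : x.x1 = x.x8) (hu : ∀ i, x.u i = 0)
    (hv : ∀ i, x.v i = 0) : ∃ c : F, x = c • (1 : Octo F) := by
  refine ⟨x.x1, oext8 ?_ ?_ ?_ ?_ ?_ ?_ ?_ ?_⟩ <;>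
    simp [hu, hv, ← h1]

/-- Step A1: kill `v` by `delta2` when the quadratic is solvable. -/
lemma stepA1 [IsAlgClosed F] (a : Octo F) (hkey : dot a.u a.v ≠ 0 ∨ a.x1 ≠ a.x8) :
    ∃ b : Octo F, Reach a b ∧ (∀ i, b.v i = 0) ∧ tr b = tr a ∧ onorm b = onorm a := by
  obtain ⟨μ, hμ⟩ := quad_root (dot a.u a.v) (a.x1 - a.x8)
    (by rcases hkey with h | h; exact Or.inl h; exact Or.inr (sub_ne_zero.mpr h))
  refine ⟨delta2 (fun i => μ * a.v i) a, ⟨_, isAut_delta2 _, rfl⟩, fun i => ?_,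
    delta2_tr _ _, delta2_onorm _ _⟩
  simp only [delta2_v, dot_eq]
  simp only [dot_eq] at hμ
  linear_combination (-(a.v i)) * hμ

/-- Step A: reach an element with `v = 0`. -/
lemma stepA [IsAlgClosed F] (a : Octo F) :
    ∃ b : Octo F, Reach a b ∧ (∀ i, b.v i = 0) ∧ tr b = tr a ∧ onorm b = onorm a := by
  by_cases hv : ∀ i, a.v i = 0
  · exact ⟨a, reach_refl a, hv, rfl, rfl⟩
  by_cases hkey : dot a.u a.v ≠ 0 ∨ a.x1 ≠ a.x8
  · exact stepA1 a hkey
  push_neg at hkey hv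
  obtain ⟨hs, hx⟩ := hkey
  obtain ⟨i0, hi0⟩ := hv
  obtain ⟨w, hw⟩ := exists_dual a.v i0 hi0
  set a' := delta1 w a with ha'
  have hs' : dot a'.u a'.v = -1 := by
    rw [ha', dot_delta1, hs, hx, hw]; ring
  obtain ⟨b, hreach, hbv, hbtr, hbn⟩ := stepA1 a'
    (Or.inl (by rw [hs']; exact neg_ne_zero.mpr one_ne_zero))
  refine ⟨b, reach_trans ⟨delta1 w, isAut_delta1 w, rfl⟩ hreach, hbv, ?_, ?_⟩
  · rw [hbtr, ha', delta1_tr]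
  · rw [hbn, ha', delta1_onorm]

end OctoPaper
namespace OctoPaper

set_option linter.unusedSectionVars false
set_option maxHeartbeats 3200000

variable {F : Type*} [Field F]

/-- Step B: from `v = 0` and nonscalar, reach `⟨x1, e₁, 0, x8⟩`. -/
lemma stepB (a : Octo F) (hv : ∀ i, a.v i = 0)
    (hns : ¬∃ c : F, a = c • (1 : Octo F)) :
    Reach a ⟨a.x1, ![1,0,0], 0, a.x8⟩ := by
  by_cases hu : ∀ i, a.u i = 0
  · -- diagonal, so x1 ≠ x8
    have hx : a.x1 ≠ a.x8 := fun h => hns (scalar_of a h hu hv)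
    have hx' : a.x1 - a.x8 ≠ 0 := sub_ne_zero.mpr hx
    refine ⟨delta1 (fun i => (a.x1 - a.x8)⁻¹ * (![1,0,0] : Fin 3 → F) i),
      isAut_delta1 _, oext8 ?_ ?_ ?_ ?_ ?_ ?_ ?_ ?_⟩ <;>
      simp [dot_eq, hv 0, hv 1, hv 2, hu 0, hu 1, hu 2, Pi.zero_apply] <;>
      field_simp
  · have hu' : a.u ≠ 0 := by
      intro h; apply hu; intro i; rw [h]; rfl
    obtain ⟨g, hg⟩ := exists_sl3 a.u hu'
    refine ⟨rho g, isAut_rho g, oext8 rfl ?_ ?_ ?_ ?_ ?_ ?_ rfl⟩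
    · exact congrFun hg 0
    · exact congrFun hg 1
    · exact congrFun hg 2
    all_goals
      rw [show ∀ i, (rho g a).v i =
        Matrix.vecMul a.v ((g : Matrix (Fin 3) (Fin 3) F).adjugate.transpose) i from
        fun i => congrFun (rho_v_fun g a) i, vecMul3, hv 0, hv 1, hv 2]
    all_goals simp

/-- Step C: normalize the diagonal part. -/
lemma stepC (x1 x8 α : F) (hα : α * (x1 + x8 - α) = x1 * x8) :
    Reach (⟨x1, ![1,0,0], 0, x8⟩ : Octo F) ⟨α, ![1,0,0], 0, x1 + x8 - α⟩ := by
  have hfac : (x1 - α) * (x1 - (x1 + x8 - α)) = 0 := by linear_combination hα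
  rcases mul_eq_zero.mp hfac with h | h
  · have h1 : x1 = α := by linear_combination h
    have heq : (⟨α, ![1,0,0], 0, x1 + x8 - α⟩ : Octo F) = ⟨x1, ![1,0,0], 0, x8⟩ := by
      refine oext8 ?_ rfl rfl rfl rfl rfl rfl ?_
      · simp; linear_combination -h1
      · simp; linear_combination h1
    rw [heq]; exact reach_refl _
  · have h8 : α = x8 := by linear_combination h
    refine ⟨delta2 (fun i => (α - x1) * (![1,0,0] : Fin 3 → F) i),
      isAut_delta2 _, oext8 ?_ ?_ ?_ ?_ ?_ ?_ ?_ ?_⟩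
    all_goals simp [dot_eq, -mul_eq_zero, Pi.zero_apply]
    all_goals try ring
    all_goals linear_combination (-(α - x1)) * h8

/-- The reduction: any nonscalar with trace `t` and norm `n` reaches the
canonical element `⟨α, e₁, 0, t - α⟩` for a root `α` of `X² - tX + n`. -/
lemma reduce [IsAlgClosed F] (a : Octo F) (hns : ¬∃ c : F, a = c • (1 : Octo F))
    (α : F) (hα : α * (tr a - α) = onorm a) :
    Reach a ⟨α, ![1,0,0], 0, tr a - α⟩ := by
  obtain ⟨b, hab, hbv, hbtr, hbn⟩ := stepA a
  have hbns : ¬∃ c : F, b = c • (1 : Octo F) := reach_nonscalar hab hns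
  have hb2 := stepB b hbv hbns
  have htr2 : b.x1 + b.x8 = tr a := by rw [← hbtr]; rfl
  have hn2 : b.x1 * b.x8 = onorm a := by
    rw [← hbn]
    unfold onorm
    rw [dot_eq, hbv 0, hbv 1, hbv 2]
    ring
  have hc := stepC b.x1 b.x8 α (by rw [htr2, hn2]; exact hα)
  have : (⟨α, ![1,0,0], 0, b.x1 + b.x8 - α⟩ : Octo F) = ⟨α, ![1,0,0], 0, tr a - α⟩ := by
    rw [htr2]
  rw [this] at hc
  exact reach_trans hab (reach_trans hb2 hc)

end OctoPaper
open OctoPaper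

/-- The trace, the norm and the indicator of being a scalar separate automorphism
orbits on the split octonions (Corollary 3.2). -/
theorem separation_one_octonion (F : Type*) [Field F] [IsAlgClosed F] (a b : Octo F)
    (htr : tr a = tr b) (hn : onorm a = onorm b)
    (hsc : (∃ c : F, a = c • (1 : Octo F)) ↔ (∃ c : F, b = c • (1 : Octo F))) :
    ∃ g : Octo F → Octo F, IsAut g ∧ g a = b := by
  by_cases hsa : ∃ c : F, a = c • (1 : Octo F)
  · obtain ⟨c, rfl⟩ := hsa
    obtain ⟨c', rfl⟩ := hsc.mp ⟨c, rfl⟩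
    have htr' : c + c = c' + c' := by
      have h1 : tr (c • (1 : Octo F)) = c + c := by simp [tr]
      have h2 : tr (c' • (1 : Octo F)) = c' + c' := by simp [tr]
      rw [← h1, ← h2, htr]
    have hn' : c * c = c' * c' := by
      have h1 : onorm (c • (1 : Octo F)) = c * c := by simp [onorm]
      have h2 : onorm (c' • (1 : Octo F)) = c' * c' := by simp [onorm]
      rw [← h1, ← h2, hn]
    have hsq : (c - c') * (c - c') = 0 := by linear_combination hn' - c' * htr'
    have hcc : c = c' := sub_eq_zero.mp (mul_self_eq_zero.mp hsq)
    rw [hcc]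
    exact ⟨id, isAut_id, rfl⟩
  · have hsb : ¬∃ c : F, b = c • (1 : Octo F) := fun h => hsa (hsc.mpr h)
    obtain ⟨α, hα⟩ := exists_alpha (tr a) (onorm a)
    have h1 : Reach a ⟨α, ![1,0,0], 0, tr a - α⟩ := reduce a hsa α hα
    have h2 : Reach b ⟨α, ![1,0,0], 0, tr b - α⟩ :=
      reduce b hsb α (by rw [← htr, ← hn]; exact hα)
    rw [← htr] at h2
    obtain ⟨g1, hg1, hg1a⟩ := h1
    obtain ⟨g2, hg2, hg2b⟩ := h2
    obtain ⟨g2', hg2', hleft, _⟩ := isAut_inv hg2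
    refine ⟨g2' ∘ g1, isAut_comp hg2' hg1, ?_⟩
    show g2' (g1 a) = b
    rw [hg1a, ← hg2b, hleft]
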